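/- arXiv:2403.19326 — 5 statements merged into one kernel-verified Lean document; each statement's English description precedes it below -/
import Mathlib

section
/- Let B_ben be a multiset of n − m real numbers and B_mal any multiset of m real numbers, with 1 ≤ m < n/2. Then the median of B_mal ∪ B_ben lies between the minimum and maximum of B_ben, i.e., min(B_ben) ≤ med(B_mal ∪ B_ben) ≤ max(B_ben). -/
private lemma countP_sort (S : Multiset ℝ) (p : ℝ → Prop) [DecidablePred p] :
    (S.sort (· ≤ ·)).countP (fun a => decide (p a)) = S.countP p := by
  conv_rhs => rw [← Multiset.sort_eq S (· ≤ ·)]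
  rw [Multiset.coe_countP]

private lemma lb_getD {l : List ℝ} (hs : l.Pairwise (· ≤ ·)) {x : ℝ} {i : ℕ}
    (hi : i < l.length) (hcnt : l.countP (fun a => decide (a < x)) ≤ i) :
    x ≤ l.getD i 0 := by
  rw [List.getD_eq_getElem l 0 hi]
  by_contra h
  push_neg at h
  have hsplit : l.countP (fun a => decide (a < x)) =
      (l.take (i+1)).countP (fun a => decide (a < x)) +
      (l.drop (i+1)).countP (fun a => decide (a < x)) := by
    rw [← List.countP_append, List.take_append_drop]
  have htake : (l.take (i+1)).countP (fun a => decide (a < x)) = i + 1 := by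
    rw [List.countP_eq_length.mpr, List.length_take]
    · omega
    · intro a ha
      obtain ⟨j, hj, rfl⟩ := List.mem_iff_getElem.mp ha
      rw [List.getElem_take]
      simp only [decide_eq_true_eq]
      have hjl : j < l.length := by simp at hj; omega
      have hji : j ≤ i := by simp at hj; omega
      calc l[j] ≤ l[i] := by
            rcases eq_or_lt_of_le hji with rfl | hlt
            · exact le_refl _
            · exact hs.rel_get_of_le (a := ⟨j, hjl⟩) (b := ⟨i, hi⟩) hji
        _ < x := h
  omega

private lemma ub_getD {l : List ℝ} (hs : l.Pairwise (· ≤ ·)) {x : ℝ} {i : ℕ}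
    (hi : i < l.length) (hcnt : l.countP (fun a => decide (x < a)) + i < l.length) :
    l.getD i 0 ≤ x := by
  rw [List.getD_eq_getElem l 0 hi]
  by_contra h
  push_neg at h
  have hsplit : l.countP (fun a => decide (x < a)) =
      (l.take i).countP (fun a => decide (x < a)) +
      (l.drop i).countP (fun a => decide (x < a)) := by
    rw [← List.countP_append, List.take_append_drop]
  have hdrop : (l.drop i).countP (fun a => decide (x < a)) = l.length - i := by
    rw [List.countP_eq_length.mpr, List.length_drop]
    intro a ha
    obtain ⟨j, hj, rfl⟩ := List.mem_iff_getElem.mp ha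
    rw [List.getElem_drop]
    simp only [decide_eq_true_eq]
    have hij : i + j < l.length := by simp at hj; omega
    calc x < l[i] := h
      _ ≤ l[i+j] := hs.rel_get_of_le (a := ⟨i, hi⟩) (b := ⟨i+j, hij⟩) (by simp [Fin.mk_le_mk])
  omega

private lemma sorted_min_le {l : List ℝ} (hs : l.Pairwise (· ≤ ·)) {y : ℝ} (hy : y ∈ l) :
    l.getD 0 0 ≤ y := by
  obtain ⟨j, hj, rfl⟩ := List.mem_iff_getElem.mp hy
  rw [List.getD_eq_getElem l 0 (by omega)]
  exact hs.rel_get_of_le (a := ⟨0, by omega⟩) (b := ⟨j, hj⟩) (by simp [Fin.mk_le_mk])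

private lemma sorted_le_max {l : List ℝ} (hs : l.Pairwise (· ≤ ·)) {y : ℝ} (hy : y ∈ l) :
    y ≤ l.getD (l.length - 1) 0 := by
  obtain ⟨j, hj, rfl⟩ := List.mem_iff_getElem.mp hy
  rw [List.getD_eq_getElem l 0 (by omega)]
  exact hs.rel_get_of_le (a := ⟨j, hj⟩) (b := ⟨l.length - 1, by omega⟩) (by simp [Fin.mk_le_mk]; omega)

noncomputable def msMean (S : Multiset ℝ) : ℝ := S.sum / S.card

noncomputable def msMed (S : Multiset ℝ) : ℝ :=
  let l := S.sort (· ≤ ·)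
  if l.length % 2 = 1 then l.getD (l.length / 2) 0
  else (l.getD (l.length / 2 - 1) 0 + l.getD (l.length / 2) 0) / 2

noncomputable def msMin (S : Multiset ℝ) : ℝ := (S.sort (· ≤ ·)).getD 0 0

noncomputable def msMax (S : Multiset ℝ) : ℝ := (S.sort (· ≤ ·)).getD (S.card - 1) 0

theorem med_between_benign_min_max
    (n m : ℕ) (hm : 1 ≤ m) (hmaj : 2 * m < n)
    (B_ben B_mal : Multiset ℝ)
    (hben : Multiset.card B_ben = n - m) (hmal : Multiset.card B_mal = m) :
    msMin B_ben ≤ msMed (B_mal + B_ben) ∧ msMed (B_mal + B_ben) ≤ msMax B_ben := by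
  set l := (B_mal + B_ben).sort (· ≤ ·) with hl
  have hs : l.Pairwise (· ≤ ·) := Multiset.pairwise_sort _ _
  have hlen : l.length = n := by
    rw [hl, Multiset.length_sort, Multiset.card_add, hmal, hben]; omega
  set x := msMin B_ben with hx
  set y := msMax B_ben with hy
  -- x is a lower bound of benign, y an upper bound
  have hxlb : ∀ a ∈ B_ben, x ≤ a := by
    intro a ha
    have : a ∈ B_ben.sort (· ≤ ·) := (Multiset.mem_sort _).mpr ha
    exact sorted_min_le (Multiset.pairwise_sort _ _) this
  have hyub : ∀ a ∈ B_ben, a ≤ y := by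
    intro a ha
    have h1 : a ∈ B_ben.sort (· ≤ ·) := (Multiset.mem_sort _).mpr ha
    have := sorted_le_max (Multiset.pairwise_sort B_ben (· ≤ ·)) h1
    rwa [Multiset.length_sort] at this
  -- counting
  have hcx : l.countP (fun a => decide (a < x)) ≤ m := by
    rw [hl, countP_sort, Multiset.countP_add]
    have h1 : B_ben.countP (fun a => a < x) = 0 :=
      Multiset.countP_eq_zero.mpr (fun a ha => not_lt.mpr (hxlb a ha))
    have h2 := Multiset.countP_le_card (fun a => a < x) B_mal
    rw [hmal] at h2
    omega
  have hcy : l.countP (fun a => decide (y < a)) ≤ m := by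
    rw [hl, countP_sort, Multiset.countP_add]
    have h1 : B_ben.countP (LT.lt y) = 0 :=
      Multiset.countP_eq_zero.mpr (fun a ha => not_lt.mpr (hyub a ha))
    have h2 := Multiset.countP_le_card (LT.lt y) B_mal
    rw [hmal] at h2
    omega
  have key : ∀ i, m ≤ i → i + m < n → x ≤ l.getD i 0 ∧ l.getD i 0 ≤ y := by
    intro i h1 h2
    constructor
    · exact lb_getD hs (by omega) (le_trans hcx h1)
    · exact ub_getD hs (by omega) (by omega)
  unfold msMed
  simp only [← hl, hlen]
  split
  · next hodd =>
      have := key (n / 2) (by omega) (by omega)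
      exact this
  · next heven =>
      have hmod : n % 2 = 0 := by omega
      have h1 := key (n / 2 - 1) (by omega) (by omega)
      have h2 := key (n / 2) (by omega) (by omega)
      constructor
      · linarith [h1.1, h2.1]
      · linarith [h1.2, h2.2]
end

section
/- For any finite multiset B_ben of n − m real numbers with 1 ≤ m < n/2, the supremum over all multisets B_mal of m real numbers of |med(B_mal ∪ B_ben) − mean(B_ben)| is finite; in particular it is bounded by (max(B_ben) − min(B_ben)) plus |med(B_ben) − mean(B_ben)|, hence by 2(max(B_ben) − min(B_ben)). -/
lemma le_getD_of_countP {l : List ℝ} (hs : l.Pairwise (· ≤ ·)) {c : ℝ} {i : ℕ}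
    (hi : i < l.length) (hc : l.countP (fun x => decide (x < c)) ≤ i) :
    c ≤ l.getD i 0 := by
  rw [List.getD_eq_getElem l 0 hi]
  by_contra h
  push_neg at h
  have htake : (l.take (i+1)).countP (fun x => decide (x < c)) = i + 1 := by
    rw [List.countP_eq_length.mpr, List.length_take]
    · omega
    · intro a ha
      obtain ⟨⟨j, hj⟩, rfl⟩ := List.mem_iff_get.mp ha
      simp only [List.get_eq_getElem, List.getElem_take, decide_eq_true_eq]
      have hjl : j < l.length := by simp [List.length_take] at hj; omega
      have hji : j ≤ i := by simp [List.length_take] at hj; omega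
      have := hs.rel_get_of_le (a := ⟨j, hjl⟩) (b := ⟨i, hi⟩) hji
      simp only [List.get_eq_getElem] at this
      linarith
  have := List.countP_append (p := fun x => decide (x < c)) (l₁ := l.take (i+1)) (l₂ := l.drop (i+1))
  rw [List.take_append_drop] at this
  omega

lemma getD_le_of_countP {l : List ℝ} (hs : l.Pairwise (· ≤ ·)) {c : ℝ} {i : ℕ}
    (hi : i < l.length) (hc : l.countP (fun x => decide (c < x)) ≤ l.length - 1 - i) :
    l.getD i 0 ≤ c := by
  rw [List.getD_eq_getElem l 0 hi]
  by_contra h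
  push_neg at h
  have hdrop : (l.drop i).countP (fun x => decide (c < x)) = l.length - i := by
    rw [List.countP_eq_length.mpr, List.length_drop]
    intro a ha
    obtain ⟨⟨j, hj⟩, rfl⟩ := List.mem_iff_get.mp ha
    simp only [List.get_eq_getElem, List.getElem_drop, decide_eq_true_eq]
    have hjl : i + j < l.length := by simp [List.length_drop] at hj; omega
    have := hs.rel_get_of_le (a := ⟨i, hi⟩) (b := ⟨i + j, hjl⟩) (Fin.mk_le_mk.mpr (by omega))
    simp only [List.get_eq_getElem] at this
    linarith
  have := List.countP_append (p := fun x => decide (c < x)) (l₁ := l.take i) (l₂ := l.drop i)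
  rw [List.take_append_drop] at this
  omega

lemma msMin_le_mem {S : Multiset ℝ} {x : ℝ} (hx : x ∈ S) : msMin S ≤ x := by
  have hxs : x ∈ S.sort (· ≤ ·) := (Multiset.mem_sort _).mpr hx
  obtain ⟨⟨j, hj⟩, rfl⟩ := List.mem_iff_get.mp hxs
  have h0 : 0 < (S.sort (· ≤ ·)).length := by omega
  rw [msMin, List.getD_eq_getElem _ 0 h0]
  have := (S.pairwise_sort (· ≤ ·)).rel_get_of_le (a := ⟨0, h0⟩) (b := ⟨j, hj⟩)
    (Fin.mk_le_mk.mpr (by omega))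
  simpa using this

lemma mem_le_msMax {S : Multiset ℝ} {x : ℝ} (hx : x ∈ S) : x ≤ msMax S := by
  have hxs : x ∈ S.sort (· ≤ ·) := (Multiset.mem_sort _).mpr hx
  obtain ⟨⟨j, hj⟩, rfl⟩ := List.mem_iff_get.mp hxs
  have hlen : (S.sort (· ≤ ·)).length = Multiset.card S := Multiset.length_sort _
  have hl : Multiset.card S - 1 < (S.sort (· ≤ ·)).length := by omega
  rw [msMax, List.getD_eq_getElem _ 0 hl]
  have := (S.pairwise_sort (· ≤ ·)).rel_get_of_le (a := ⟨j, hj⟩)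
    (b := ⟨Multiset.card S - 1, hl⟩) (Fin.mk_le_mk.mpr (by omega))
  simpa using this

theorem med_close_to_benign_mean
    (n m : ℕ) (hm : 1 ≤ m) (hmaj : 2 * m < n)
    (B_ben : Multiset ℝ) (hben : Multiset.card B_ben = n - m) :
    ∀ B_mal : Multiset ℝ, Multiset.card B_mal = m →
      |msMed (B_mal + B_ben) - msMean B_ben| ≤
        (msMax B_ben - msMin B_ben) + |msMed B_ben - msMean B_ben| ∧
      |msMed (B_mal + B_ben) - msMean B_ben| ≤ 2 * (msMax B_ben - msMin B_ben) := by
  intro B_mal hmal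
  set c := msMin B_ben with hc
  set d := msMax B_ben with hd
  set S := B_mal + B_ben with hS
  set L := S.sort (· ≤ ·) with hL
  have hsort : L.Pairwise (· ≤ ·) := S.pairwise_sort _
  have hNL : L.length = n := by
    rw [hL, Multiset.length_sort, hS, Multiset.card_add, hmal, hben]; omega
  -- count of elements < c is at most m
  have hcount_lt : L.countP (fun x => decide (x < c)) ≤ m := by
    have : (L : Multiset ℝ) = S := Multiset.sort_eq _ _
    have h1 : Multiset.countP (fun x => x < c) S = L.countP (fun x => decide (x < c)) := by
      rw [← this, Multiset.coe_countP]
    rw [← h1, hS, Multiset.countP_add]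
    have h2 : Multiset.countP (fun x => x < c) B_ben = 0 :=
      Multiset.countP_eq_zero.mpr (fun a ha => not_lt.mpr (msMin_le_mem ha))
    have h3 : Multiset.countP (fun x => x < c) B_mal ≤ m := by
      rw [← hmal]; exact Multiset.countP_le_card _ _
    omega
  have hcount_gt : L.countP (fun x => decide (d < x)) ≤ m := by
    have : (L : Multiset ℝ) = S := Multiset.sort_eq _ _
    have h1 : Multiset.countP (fun x => d < x) S = L.countP (fun x => decide (d < x)) := by
      rw [← this, Multiset.coe_countP]
    rw [← h1, hS, Multiset.countP_add]
    have h2 : Multiset.countP (fun x => d < x) B_ben = 0 :=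
      Multiset.countP_eq_zero.mpr (fun a ha => not_lt.mpr (mem_le_msMax ha))
    have h3 : Multiset.countP (fun x => d < x) B_mal ≤ m := by
      rw [← hmal]; exact Multiset.countP_le_card _ _
    omega
  -- any index in [m, n-1-m] gives value in [c, d]
  have hwin : ∀ i, m ≤ i → i + m + 1 ≤ n → c ≤ L.getD i 0 ∧ L.getD i 0 ≤ d := by
    intro i h1 h2
    have hi : i < L.length := by omega
    constructor
    · exact le_getD_of_countP hsort hi (by omega)
    · exact getD_le_of_countP hsort hi (by omega)
  -- median of combined in [c,d]
  have hmed : c ≤ msMed S ∧ msMed S ≤ d := by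
    rw [msMed]
    simp only [← hL, hNL]
    split_ifs with hpar
    · exact hwin (n / 2) (by omega) (by omega)
    · have ha := hwin (n / 2 - 1) (by omega) (by omega)
      have hb := hwin (n / 2) (by omega) (by omega)
      constructor <;> [linarith [ha.1, hb.1]; linarith [ha.2, hb.2]]
  -- mean of benign in [c,d]
  have hben_pos : 0 < Multiset.card B_ben := by omega
  have hmean : c ≤ msMean B_ben ∧ msMean B_ben ≤ d := by
    have h1 : Multiset.card B_ben • c ≤ B_ben.sum :=
      Multiset.card_nsmul_le_sum (fun x hx => msMin_le_mem hx)
    have h2 : B_ben.sum ≤ Multiset.card B_ben • d :=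
      Multiset.sum_le_card_nsmul _ _ (fun x hx => mem_le_msMax hx)
    have hcpos : (0 : ℝ) < (Multiset.card B_ben : ℝ) := by exact_mod_cast hben_pos
    rw [nsmul_eq_mul] at h1 h2
    constructor
    · rw [msMean, le_div_iff₀ hcpos]; linarith
    · rw [msMean, div_le_iff₀ hcpos]; linarith
  have hcd : c ≤ d := le_trans hmean.1 hmean.2
  have hkey : |msMed S - msMean B_ben| ≤ d - c := by
    rw [abs_le]
    constructor <;> [linarith [hmed.1, hmean.2]; linarith [hmed.2, hmean.1]]
  constructor
  · have : (0:ℝ) ≤ |msMed B_ben - msMean B_ben| := abs_nonneg _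
    linarith
  · linarith
end

section
/- The geometric median of a set of n points in R^d, with m < n/2 of them adversarial, satisfies: ‖geomed(B_mal ∪ B_ben) − geomed(B_ben)‖₂ ≤ (1/√(1 − m²/(n−m)²)) · max_{x ∈ B_ben} ‖x − geomed(B_ben)‖₂, where B_ben has n − m points and B_mal has m points. -/
open scoped RealInnerProductSpace

lemma le_msMax {S : Multiset ℝ} {a : ℝ} (ha : a ∈ S) : a ≤ msMax S := by
  unfold msMax
  have hmem : a ∈ S.sort (· ≤ ·) := (Multiset.mem_sort _).2 ha
  have hsorted : (S.sort (· ≤ ·)).Pairwise (· ≤ ·) := S.pairwise_sort _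
  have hlen : (S.sort (· ≤ ·)).length = Multiset.card S := Multiset.length_sort _
  obtain ⟨i, hi⟩ := List.mem_iff_get.1 hmem
  have hpos : 0 < (S.sort (· ≤ ·)).length := i.pos
  have hlt : (S.sort (· ≤ ·)).length - 1 < (S.sort (· ≤ ·)).length := Nat.sub_lt hpos one_pos
  rw [← hlen, List.getD_eq_getElem _ _ hlt, ← hi]
  exact hsorted.rel_get_of_le (b := ⟨_, hlt⟩) (by simp [Fin.le_def]; omega)

lemma core_geom {E : Type*} [NormedAddCommGroup E] [InnerProductSpace ℝ E]
    (Δ v : E) (r : ℝ) (hv : ‖v‖ ≤ r) (hr : r < ‖Δ‖) :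
    Real.sqrt (‖Δ‖ ^ 2 - r ^ 2) * ‖Δ - v‖ ≤ ⟪Δ, Δ - v⟫ := by
  have hr0 : 0 ≤ r := le_trans (norm_nonneg v) hv
  have hr2 : r ^ 2 < ‖Δ‖ ^ 2 := by nlinarith
  have ht := abs_le.1 (le_trans (abs_real_inner_le_norm Δ v)
    (mul_le_mul_of_nonneg_left hv (norm_nonneg Δ)))
  have hv2 : ‖v‖ ^ 2 ≤ r ^ 2 := by nlinarith [norm_nonneg v]
  have hw : ‖Δ - v‖ ^ 2 = ‖Δ‖ ^ 2 - 2 * ⟪Δ, v⟫ + ‖v‖ ^ 2 := norm_sub_sq_real Δ v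
  have hiw : ⟪Δ, Δ - v⟫ = ‖Δ‖ ^ 2 - ⟪Δ, v⟫ := by
    rw [inner_sub_right, real_inner_self_eq_norm_sq]
  have hpos : 0 ≤ ‖Δ‖ ^ 2 - ⟪Δ, v⟫ := by nlinarith [ht.2]
  have h1 : Real.sqrt (‖Δ‖ ^ 2 - r ^ 2) * ‖Δ - v‖
      = Real.sqrt ((‖Δ‖ ^ 2 - r ^ 2) * ‖Δ - v‖ ^ 2) := by
    rw [Real.sqrt_mul (by nlinarith), Real.sqrt_sq (norm_nonneg _)]
  have h2 : (‖Δ‖ ^ 2 - r ^ 2) * ‖Δ - v‖ ^ 2 ≤ (‖Δ‖ ^ 2 - ⟪Δ, v⟫) ^ 2 := by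
    rw [hw]
    nlinarith [sq_nonneg (⟪Δ, v⟫ - r ^ 2), mul_nonneg (sub_nonneg.2 hv2) (sub_nonneg.2 hr2.le)]
  rw [h1, hiw]
  calc Real.sqrt ((‖Δ‖ ^ 2 - r ^ 2) * ‖Δ - v‖ ^ 2) ≤ Real.sqrt ((‖Δ‖ ^ 2 - ⟪Δ, v⟫) ^ 2) :=
        Real.sqrt_le_sqrt h2
    _ = ‖Δ‖ ^ 2 - ⟪Δ, v⟫ := Real.sqrt_sq hpos

set_option maxHeartbeats 1000000 in
theorem geomed_robust
    (d n m : ℕ) (hm : 1 ≤ m) (hmaj : 2 * m < n)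
    (geomed : Multiset (EuclideanSpace ℝ (Fin d)) → EuclideanSpace ℝ (Fin d))
    (hgeomed : ∀ S : Multiset (EuclideanSpace ℝ (Fin d)), ∀ z : EuclideanSpace ℝ (Fin d),
      (S.map fun x => ‖geomed S - x‖).sum ≤ (S.map fun x => ‖z - x‖).sum)
    (B_ben B_mal : Multiset (EuclideanSpace ℝ (Fin d)))
    (hben : Multiset.card B_ben = n - m) (hmal : Multiset.card B_mal = m) :
    ‖geomed (B_mal + B_ben) - geomed B_ben‖ ≤
      (1 / Real.sqrt (1 - (m : ℝ) ^ 2 / ((n : ℝ) - (m : ℝ)) ^ 2)) *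
        msMax (B_ben.map fun x => ‖x - geomed B_ben‖) := by
  set g := geomed B_ben with hg
  set G := geomed (B_mal + B_ben) with hGdef
  set r := msMax (B_ben.map fun x => ‖x - g‖) with hrdef
  set Δ := G - g with hΔdef
  set D := ‖Δ‖ with hDdef
  set K : ℝ := (n : ℝ) - (m : ℝ) with hKdef
  clear_value g G r Δ D K
  have hmn : m < n := by omega
  have h2m : (2 * (m:ℝ)) < n := by exact_mod_cast hmaj
  have hm1 : (1:ℝ) ≤ m := by exact_mod_cast hm
  have hmK : (m:ℝ) < K := by rw [hKdef]; linarith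
  have hK0 : (0:ℝ) < K := by linarith
  have hmKsq : (m:ℝ)^2 < K^2 := by
    have h := mul_pos (sub_pos.2 hmK) (show (0:ℝ) < K + (m:ℝ) by linarith)
    nlinarith only [h]
  have hu : (0:ℝ) < 1 - (m:ℝ)^2 / K^2 := by
    rw [sub_pos, div_lt_one (by positivity)]
    exact hmKsq
  have hbne : B_ben ≠ 0 := by
    intro h0
    rw [h0] at hben; simp at hben; omega
  obtain ⟨x₀, hx₀⟩ := Multiset.exists_mem_of_ne_zero hbne
  have hxr : ∀ x ∈ B_ben, ‖x - g‖ ≤ r := by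
    intro x hx
    rw [hrdef]
    exact le_msMax (Multiset.mem_map_of_mem _ hx)
  have hr0 : 0 ≤ r := le_trans (norm_nonneg (x₀ - g)) (hxr x₀ hx₀)
  by_contra hcon
  push_neg at hcon
  set C := 1 / Real.sqrt (1 - (m:ℝ)^2 / K^2) with hCdef
  clear_value C
  have hsqpos : 0 < Real.sqrt (1 - (m:ℝ)^2 / K^2) := Real.sqrt_pos.2 hu
  have hsqle1 : Real.sqrt (1 - (m:ℝ)^2 / K^2) ≤ 1 := by
    have h : 0 ≤ (m:ℝ)^2 / K^2 := by positivity
    calc Real.sqrt (1 - (m:ℝ)^2 / K^2) ≤ Real.sqrt 1 :=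
          Real.sqrt_le_sqrt (by linarith only [h])
      _ = 1 := Real.sqrt_one
  have hCge1 : 1 ≤ C := by
    rw [hCdef, le_div_iff₀ hsqpos, one_mul]; exact hsqle1
  have hrD : r < D :=
    lt_of_le_of_lt (by calc r = 1 * r := (one_mul r).symm
      _ ≤ C * r := mul_le_mul_of_nonneg_right hCge1 hr0) hcon
  have hD0 : 0 < D := lt_of_le_of_lt hr0 hrD
  have hC2 : C^2 = K^2 / (K^2 - (m:ℝ)^2) := by
    rw [hCdef, div_pow, one_pow, Real.sq_sqrt hu.le]
    rw [show 1 - (m:ℝ)^2/K^2 = (K^2 - (m:ℝ)^2)/K^2 by field_simp]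
    rw [one_div_div]
  have hK2m : 0 < K^2 - (m:ℝ)^2 := by linarith only [hmKsq]
  have hCr2 : C^2 * r^2 < D^2 := by
    have h := mul_self_lt_mul_self (by positivity : (0:ℝ) ≤ C * r) hcon
    calc C^2 * r^2 = (C*r)*(C*r) := by ring
      _ < D*D := h
      _ = D^2 := by ring
  have hδ0 : 0 < K^2*D^2 - K^2*r^2 - (m:ℝ)^2*D^2 := by
    rw [hC2, div_mul_eq_mul_div, div_lt_iff₀ hK2m] at hCr2
    nlinarith only [hCr2]
  set δ := K^2*D^2 - K^2*r^2 - (m:ℝ)^2*D^2 with hδdef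
  clear_value δ
  set t := δ / (4*K^2*D^2) with htdef
  clear_value t
  have ht0 : 0 < t := by rw [htdef]; positivity
  have htne : 2*t*(K^2*D^2) = δ/2 := by
    rw [htdef]; field_simp; ring
  have ht14 : t ≤ 1/4 := by
    rw [htdef, div_le_iff₀ (by positivity)]
    have h1 : 0 ≤ K^2*r^2 := by positivity
    have h2 : 0 ≤ (m:ℝ)^2*D^2 := by positivity
    nlinarith only [h1, h2, hδdef]
  have h1t : 0 < 1 - t := by linarith only [ht14]
  set D' := (1 - t) * D with hD'def
  clear_value D'
  have hD'0 : 0 < D' := by rw [hD'def]; exact mul_pos h1t hD0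
  have hKey : (m:ℝ)^2*D^2 + K^2*r^2 < K^2*D'^2 := by
    have hsq : 0 ≤ t^2*(K^2*D^2) := by positivity
    rw [hD'def]
    nlinarith only [htne, hδ0, hδdef, hsq]
  have hrD' : r < D' := by
    have hK2 : (0:ℝ) < K^2 := by positivity
    have h2 : 0 < K^2 * (D'^2 - r^2) := by nlinarith only [hKey, sq_nonneg ((m:ℝ)*D)]
    have h3 : 0 < D'^2 - r^2 := by
      by_contra hcc
      push_neg at hcc
      nlinarith only [mul_nonpos_of_nonneg_of_nonpos hK2.le hcc, h2]
    nlinarith only [h3, hr0, hD'0]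
  set c := Real.sqrt (D'^2 - r^2) with hcdef
  clear_value c
  have hc0 : 0 ≤ c := hcdef ▸ Real.sqrt_nonneg _
  have hc2 : c^2 = D'^2 - r^2 := by
    rw [hcdef]; exact Real.sq_sqrt (by nlinarith only [hrD', hr0])
  set z : EuclideanSpace ℝ (Fin d) := G - t • Δ with hzdef
  clear_value z
  -- pointwise benign bound
  have hben_pt : ∀ x ∈ B_ben, t * c ≤ (1-t) * (‖G - x‖ - ‖z - x‖) := by
    intro x hx
    have hvr : ‖x - g‖ ≤ r := hxr x hx
    have hw_eq : z - x = (1-t) • Δ - (x - g) := by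
      rw [hzdef, hΔdef]; module
    have hΔ' : ‖(1-t) • Δ‖ = D' := by
      rw [norm_smul, Real.norm_eq_abs, abs_of_pos h1t, hD'def, hDdef]
    have hcore := core_geom ((1-t) • Δ) (x - g) r hvr (by rw [hΔ']; exact hrD')
    rw [hΔ', ← hcdef, ← hw_eq, real_inner_smul_left] at hcore
    have hwpos : 0 < ‖z - x‖ := by
      have h1 := norm_sub_norm_le ((1-t) • Δ) (x - g)
      rw [← hw_eq, hΔ'] at h1
      linarith only [h1, hvr, hrD']
    have hGx : G - x = (z - x) + t • Δ := by rw [hzdef]; module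
    have hexp : ⟪G - x, z - x⟫ = ‖z - x‖^2 + t * ⟪Δ, z - x⟫ := by
      rw [hGx, inner_add_left, real_inner_smul_left, real_inner_self_eq_norm_sq]
    have hA : ‖z - x‖^2 + t * ⟪Δ, z - x⟫ ≤ ‖G - x‖ * ‖z - x‖ := by
      rw [← hexp]; exact real_inner_le_norm _ _
    have hA' := mul_le_mul_of_nonneg_left hA h1t.le
    have hcore' := mul_le_mul_of_nonneg_left hcore ht0.le
    nlinarith only [hA', hcore', hwpos]
  -- pointwise malicious bound
  have hmal_pt : ∀ x ∈ B_mal, ‖z - x‖ ≤ ‖G - x‖ + t * D := by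
    intro x _
    have h1 : z - x = (G - x) + (-(t • Δ)) := by rw [hzdef]; module
    calc ‖z - x‖ = ‖(G - x) + (-(t • Δ))‖ := by rw [h1]
      _ ≤ ‖G - x‖ + ‖-(t • Δ)‖ := norm_add_le _ _
      _ = ‖G - x‖ + t * D := by
          rw [norm_neg, norm_smul, Real.norm_eq_abs, abs_of_pos ht0, hDdef]
  -- sums
  have hopt := hgeomed (B_mal + B_ben) z
  rw [Multiset.map_add, Multiset.map_add, Multiset.sum_add, Multiset.sum_add] at hopt
  rw [← hGdef] at hopt
  have hmal_sum : (B_mal.map fun x => ‖z - x‖).sum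
      ≤ (B_mal.map fun x => ‖G - x‖).sum + (m:ℝ) * (t*D) := by
    have h := Multiset.sum_map_le_sum_map (fun x => ‖z - x‖) (fun x => ‖G - x‖ + t*D) hmal_pt
    rw [Multiset.sum_map_add] at h
    have h2 : ((B_mal.map fun _ => t*D)).sum = (m:ℝ) * (t*D) := by
      rw [Multiset.map_const', Multiset.sum_replicate, hmal, nsmul_eq_mul]
    rw [h2] at h
    exact h
  have hben_sum : (K : ℝ) * (t * c)
      ≤ (1-t) * ((B_ben.map fun x => ‖G - x‖).sum - (B_ben.map fun x => ‖z - x‖).sum) := by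
    have h := Multiset.sum_map_le_sum_map (fun _ => t*c) (fun x => (1-t)*(‖G - x‖ - ‖z - x‖)) hben_pt
    rw [Multiset.map_const', Multiset.sum_replicate, hben, nsmul_eq_mul] at h
    have hrw : (B_ben.map fun x => (1-t)*(‖G - x‖ - ‖z - x‖)).sum
        = (1-t) * ((B_ben.map fun x => ‖G - x‖).sum - (B_ben.map fun x => ‖z - x‖).sum) := by
      rw [Multiset.sum_map_mul_left]
      congr 1
      exact Multiset.sum_map_sub
    rw [hrw] at h
    have hcast : ((n - m : ℕ) : ℝ) = K := by
      rw [hKdef, Nat.cast_sub hmn.le]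
    rw [hcast] at h
    exact h
  -- combine
  have hdiff : (B_ben.map fun x => ‖G - x‖).sum - (B_ben.map fun x => ‖z - x‖).sum
      ≤ (m:ℝ) * (t*D) := by linarith only [hopt, hmal_sum]
  have hfinal : K * (t * c) ≤ (m:ℝ) * (t * D) := by
    have h1 : (1-t) * ((B_ben.map fun x => ‖G - x‖).sum - (B_ben.map fun x => ‖z - x‖).sum)
        ≤ (1-t) * ((m:ℝ) * (t*D)) := mul_le_mul_of_nonneg_left hdiff h1t.le
    have h2 : (1-t) * ((m:ℝ) * (t*D)) ≤ (m:ℝ) * (t*D) := by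
      have h3 : 0 ≤ (m:ℝ) * (t*D) := by positivity
      nlinarith only [h3, ht0]
    linarith only [hben_sum, h1, h2]
  have hKc : K * c ≤ (m:ℝ) * D := by
    rw [show K * (t*c) = t * (K*c) by ring, show (m:ℝ) * (t*D) = t * ((m:ℝ)*D) by ring] at hfinal
    exact le_of_mul_le_mul_left hfinal ht0
  have hKc2 : K^2 * (D'^2 - r^2) ≤ (m:ℝ)^2 * D^2 := by
    have h := mul_self_le_mul_self (by positivity : (0:ℝ) ≤ K * c) hKc
    have h4 : K^2*c^2 = K^2*(D'^2 - r^2) := by rw [hc2]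
    nlinarith only [h, h4]
  nlinarith only [hKey, hKc2]
end

section
/- Adding fewer than half adversarial points cannot move the geometric median infinitely far: for B_ben a finite multiset of n − m points in R^d and 1 ≤ m < n/2, the supremum over all multisets B_mal of m points in R^d of ‖geomed(B_mal ∪ B_ben) − mean(B_ben)‖₂ is finite. -/
theorem geomed_cannot_move_infinitely_far
    (d n m : ℕ) (hm : 1 ≤ m) (hmaj : 2 * m < n)
    (geomed : Multiset (EuclideanSpace ℝ (Fin d)) → EuclideanSpace ℝ (Fin d))
    (hgeomed : ∀ S : Multiset (EuclideanSpace ℝ (Fin d)), ∀ z : EuclideanSpace ℝ (Fin d),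
      (S.map fun x => ‖geomed S - x‖).sum ≤ (S.map fun x => ‖z - x‖).sum)
    (B_ben : Multiset (EuclideanSpace ℝ (Fin d)))
    (hben : Multiset.card B_ben = n - m) :
    ∃ K : ℝ, ∀ B_mal : Multiset (EuclideanSpace ℝ (Fin d)), Multiset.card B_mal = m →
      ‖geomed (B_mal + B_ben) - (Multiset.card B_ben : ℝ)⁻¹ • B_ben.sum‖ ≤ K := by
  set μ : EuclideanSpace ℝ (Fin d) := (Multiset.card B_ben : ℝ)⁻¹ • B_ben.sum with hμ
  set A : ℝ := (B_ben.map fun x => ‖μ - x‖).sum with hA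
  have hmn : m ≤ n := le_of_lt (lt_of_le_of_lt (by omega) hmaj)
  have hnm : 0 < (n : ℝ) - 2 * m := by
    have : (2 * m : ℝ) < n := by exact_mod_cast hmaj
    linarith
  refine ⟨2 * A / ((n : ℝ) - 2 * m), ?_⟩
  intro B_mal hmal
  set g : EuclideanSpace ℝ (Fin d) := geomed (B_mal + B_ben) with hg
  set t : ℝ := ‖g - μ‖ with ht
  have hM : 0 ≤ (B_mal.map fun x => ‖μ - x‖).sum :=
    Multiset.sum_nonneg (by intro y hy; rcases Multiset.mem_map.1 hy with ⟨x, _, rfl⟩; positivity)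
  -- lower bound on malicious part of cost at g
  have h1 : (B_mal.map fun x => ‖μ - x‖ - t).sum ≤ (B_mal.map fun x => ‖g - x‖).sum := by
    apply Multiset.sum_map_le_sum_map
    intro x hx
    have : ‖μ - x‖ ≤ ‖μ - g‖ + ‖g - x‖ := by
      have := norm_add_le (μ - g) (g - x)
      simpa [sub_add_sub_cancel] using this
    have h2 : ‖μ - g‖ = t := by rw [ht, norm_sub_rev]
    linarith
  -- lower bound on benign part of cost at g
  have h2 : (B_ben.map fun x => t - ‖μ - x‖).sum ≤ (B_ben.map fun x => ‖g - x‖).sum := by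
    apply Multiset.sum_map_le_sum_map
    intro x hx
    have : ‖g - μ‖ ≤ ‖g - x‖ + ‖x - μ‖ := by
      have := norm_add_le (g - x) (x - μ)
      simpa [sub_add_sub_cancel] using this
    have h3 : ‖x - μ‖ = ‖μ - x‖ := norm_sub_rev _ _
    linarith
  have hopt := hgeomed (B_mal + B_ben) μ
  rw [Multiset.map_add, Multiset.sum_add, Multiset.map_add, Multiset.sum_add] at hopt
  have e1 : (B_mal.map fun x => ‖μ - x‖ - t).sum
      = (B_mal.map fun x => ‖μ - x‖).sum - (m : ℝ) * t := by
    rw [Multiset.sum_map_sub]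
    simp [hmal, mul_comm]
  have e2 : (B_ben.map fun x => t - ‖μ - x‖).sum
      = ((n : ℝ) - m) * t - A := by
    rw [Multiset.sum_map_sub]
    have : ((Multiset.card B_ben : ℕ) : ℝ) = (n : ℝ) - m := by
      rw [hben, Nat.cast_sub hmn]
    simp only [Multiset.map_const', Multiset.sum_replicate, nsmul_eq_mul, this, hA]
  rw [e1] at h1
  rw [e2] at h2
  -- combine:  M - m t + (n-m) t - A ≤ cost(g) ≤ cost(μ) = M + A
  have key : ((n : ℝ) - 2 * m) * t ≤ 2 * A := by nlinarith
  calc t ≤ 2 * A / ((n : ℝ) - 2 * m) := by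
        rw [le_div_iff₀ hnm]; nlinarith
end

section
/- The median absolute deviation of a contaminated batch is bounded when the malicious samples are few: let B_ben be a multiset of n − m real numbers and B_mal any multiset of m real numbers with m < n/4, and set S = B_mal ∪ B_ben, η = med(S). Then MAD(S) = med({|x − η| : x ∈ S}) ≤ 2(max(B_ben) − min(B_ben)). -/
/-- In a sorted list, entries with index below the count of elements ≤ D are ≤ D. -/
lemma getD_le_of_lt_countP {l : List ℝ} (hs : l.Pairwise (· ≤ ·)) {D : ℝ} {i : ℕ}
    (hi : i < l.countP (fun x => decide (x ≤ D))) : l.getD i 0 ≤ D := by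
  induction l generalizing i with
  | nil => simp at hi
  | cons a t ih =>
    have hst : t.Pairwise (· ≤ ·) := hs.of_cons
    by_cases ha : a ≤ D
    · cases i with
      | zero => simpa using ha
      | succ j =>
        have hcc : (a :: t).countP (fun x => decide (x ≤ D))
            = t.countP (fun x => decide (x ≤ D)) + 1 := by
          simp [List.countP_cons, ha]
        rw [hcc] at hi
        have hj : j < t.countP (fun x => decide (x ≤ D)) := by omega
        simpa using ih hst hj
    · exfalso
      have : t.countP (fun x => decide (x ≤ D)) = 0 := by
        apply List.countP_eq_zero.2
        intro x hx
        have hax : a ≤ x := (List.pairwise_cons.1 hs).1 x hx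
        simp only [decide_eq_true_eq]
        intro hxD
        exact ha (le_trans hax hxD)
      have hcc : (a :: t).countP (fun x => decide (x ≤ D)) = 0 := by
        simp [List.countP_cons, ha, this]
      rw [hcc] at hi
      omega

/-- In a sorted list, entries with index at least the count of elements < D are ≥ D. -/
lemma le_getD_of_countP_le {l : List ℝ} (hs : l.Pairwise (· ≤ ·)) {D : ℝ} {i : ℕ}
    (hc : l.countP (fun x => decide (x < D)) ≤ i) (hi : i < l.length) : D ≤ l.getD i 0 := by
  induction l generalizing i with
  | nil => simp at hi
  | cons a t ih =>
    have hst : t.Pairwise (· ≤ ·) := hs.of_cons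
    by_cases ha : a < D
    · cases i with
      | zero =>
        have hcc : (a :: t).countP (fun x => decide (x < D))
            = t.countP (fun x => decide (x < D)) + 1 := by
          simp [List.countP_cons, ha]
        rw [hcc] at hc
        omega
      | succ j =>
        have hcc : (a :: t).countP (fun x => decide (x < D))
            = t.countP (fun x => decide (x < D)) + 1 := by
          simp [List.countP_cons, ha]
        rw [hcc] at hc
        have := ih hst (i := j) (by omega) (by simpa using Nat.lt_of_succ_lt_succ (by simpa using hi))
        simpa using this
    · cases i with
      | zero => simpa using not_lt.1 ha
      | succ j =>
        have hz : t.countP (fun x => decide (x < D)) = 0 := by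
          apply List.countP_eq_zero.2
          intro x hx
          have hax : a ≤ x := (List.pairwise_cons.1 hs).1 x hx
          simp only [decide_eq_true_eq]
          intro hxD
          exact ha (lt_of_le_of_lt hax hxD)
        have := ih hst (i := j) (by omega) (by simpa using Nat.lt_of_succ_lt_succ (by simpa using hi))
        simpa using this

lemma sorted_getD_zero_le {l : List ℝ} (hs : l.Pairwise (· ≤ ·)) {x : ℝ} (hx : x ∈ l) :
    l.getD 0 0 ≤ x := by
  cases l with
  | nil => simp at hx
  | cons a t =>
    rcases List.mem_cons.1 hx with rfl | hxt
    · simp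
    · simpa using (List.pairwise_cons.1 hs).1 x hxt

lemma sorted_le_getD_last {l : List ℝ} (hs : l.Pairwise (· ≤ ·)) {x : ℝ} (hx : x ∈ l) :
    x ≤ l.getD (l.length - 1) 0 := by
  induction l with
  | nil => simp at hx
  | cons a t ih =>
    have hst : t.Pairwise (· ≤ ·) := hs.of_cons
    cases t with
    | nil => simp at hx; simpa using hx.le
    | cons b u =>
      have hne : (b :: u) ≠ [] := by simp
      have hlast : (a :: b :: u).getD ((a :: b :: u).length - 1) 0
          = (b :: u).getD ((b :: u).length - 1) 0 := by
        simp [List.getD]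
      rw [hlast]
      rcases List.mem_cons.1 hx with rfl | hxt
      · have hmem : (b :: u).getD ((b :: u).length - 1) 0 ∈ (b :: u) := by
          have : (b :: u).length - 1 < (b :: u).length := by simp
          rw [List.getD_eq_getElem _ _ this]
          exact List.getElem_mem this
        exact le_trans ((List.pairwise_cons.1 hs).1 _ hmem) le_rfl
      · exact ih hst hxt

lemma msMed_le {T : Multiset ℝ} {D : ℝ}
    (h : Multiset.card T < 2 * Multiset.card (T.filter (· ≤ D))) : msMed T ≤ D := by
  classical
  set l := T.sort (· ≤ ·) with hl
  have hsorted : l.Pairwise (· ≤ ·) := T.pairwise_sort _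
  have hlen : l.length = Multiset.card T := T.length_sort _
  have hcnt : l.countP (fun x => decide (x ≤ D)) = Multiset.card (T.filter (· ≤ D)) := by
    have : (l : Multiset ℝ) = T := T.sort_eq _
    rw [← this]
    simp [Multiset.countP_eq_card_filter, List.countP_eq_length_filter]
  have hkey : ∀ i, i < l.countP (fun x => decide (x ≤ D)) → l.getD i 0 ≤ D :=
    fun i hi => getD_le_of_lt_countP hsorted hi
  show (if l.length % 2 = 1 then l.getD (l.length / 2) 0
      else (l.getD (l.length / 2 - 1) 0 + l.getD (l.length / 2) 0) / 2) ≤ D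
  split_ifs with hpar
  · exact hkey _ (by omega)
  · have h1 : l.getD (l.length / 2 - 1) 0 ≤ D := hkey _ (by omega)
    have h2 : l.getD (l.length / 2) 0 ≤ D := hkey _ (by omega)
    linarith

lemma le_msMed {T : Multiset ℝ} {D : ℝ}
    (h : 4 * Multiset.card (T.filter (· < D)) < Multiset.card T) : D ≤ msMed T := by
  classical
  set l := T.sort (· ≤ ·) with hl
  have hsorted : l.Pairwise (· ≤ ·) := T.pairwise_sort _
  have hlen : l.length = Multiset.card T := T.length_sort _
  have hcnt : l.countP (fun x => decide (x < D)) = Multiset.card (T.filter (· < D)) := by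
    have : (l : Multiset ℝ) = T := T.sort_eq _
    rw [← this]
    simp [Multiset.countP_eq_card_filter, List.countP_eq_length_filter]
  have hkey : ∀ i, l.countP (fun x => decide (x < D)) ≤ i → i < l.length → D ≤ l.getD i 0 :=
    fun i hi hi' => le_getD_of_countP_le hsorted hi hi'
  show D ≤ (if l.length % 2 = 1 then l.getD (l.length / 2) 0
      else (l.getD (l.length / 2 - 1) 0 + l.getD (l.length / 2) 0) / 2)
  split_ifs with hpar
  · exact hkey _ (by omega) (by omega)
  · have h1 : D ≤ l.getD (l.length / 2 - 1) 0 := hkey _ (by omega) (by omega)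
    have h2 : D ≤ l.getD (l.length / 2) 0 := hkey _ (by omega) (by omega)
    linarith

theorem mad_bounded_nonmajority
    (n m : ℕ) (hm : 4 * m < n)
    (B_ben B_mal : Multiset ℝ)
    (hben : Multiset.card B_ben = n - m) (hmal : Multiset.card B_mal = m) :
    msMed ((B_mal + B_ben).map fun x => |x - msMed (B_mal + B_ben)|) ≤
      2 * (msMax B_ben - msMin B_ben) := by
  classical
  set S := B_mal + B_ben with hS
  set η := msMed S with hη
  set a := msMin B_ben with ha
  set b := msMax B_ben with hb
  have hmn : m ≤ n := by omega
  have hcardS : Multiset.card S = n := by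
    simp [hS, hmal, hben]; omega
  -- benign elements lie in [a, b]
  set lb := B_ben.sort (· ≤ ·) with hlb
  have hsb : lb.Pairwise (· ≤ ·) := B_ben.pairwise_sort _
  have hlenb : lb.length = n - m := by rw [hlb]; simp [hben]
  have hadef : a = lb.getD 0 0 := by rw [ha]; unfold msMin; rw [← hlb]
  have hbdef : b = lb.getD (lb.length - 1) 0 := by
    rw [hb]; unfold msMax; rw [← hlb, hben, hlenb]
  have hmemb : ∀ x, x ∈ B_ben ↔ x ∈ lb := fun x => (B_ben.mem_sort _).symm
  have hax : ∀ x ∈ B_ben, a ≤ x := by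
    intro x hx
    rw [hadef]
    exact sorted_getD_zero_le hsb ((hmemb x).1 hx)
  have hxb : ∀ x ∈ B_ben, x ≤ b := by
    intro x hx
    rw [hbdef]
    exact sorted_le_getD_last hsb ((hmemb x).1 hx)
  have hblen : lb ≠ [] := by
    intro hnil
    rw [hnil] at hlenb
    simp at hlenb
    omega
  have hab : a ≤ b := by
    have h0 : lb.getD 0 0 ∈ lb := by
      have h0' : 0 < lb.length := List.length_pos_iff.2 hblen
      rw [List.getD_eq_getElem _ _ h0']
      exact List.getElem_mem h0'
    exact hxb _ ((hmemb _).2 h0)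
  -- η ≤ b
  have hηb : η ≤ b := by
    apply msMed_le
    have hfb : B_ben.filter (· ≤ b) = B_ben := Multiset.filter_eq_self.2 hxb
    have : Multiset.card (S.filter (· ≤ b)) = Multiset.card (B_mal.filter (· ≤ b)) + (n - m) := by
      rw [hS, Multiset.filter_add, Multiset.card_add, hfb, hben]
    omega
  -- a ≤ η
  have haη : a ≤ η := by
    apply le_msMed
    have hfb : B_ben.filter (· < a) = 0 := by
      rw [Multiset.filter_eq_nil]
      intro x hx
      exact not_lt.2 (hax x hx)
    have hle : Multiset.card (S.filter (· < a)) ≤ m := by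
      rw [hS, Multiset.filter_add, Multiset.card_add, hfb]
      simp
      calc Multiset.card (B_mal.filter (· < a)) ≤ Multiset.card B_mal :=
            Multiset.card_le_card (Multiset.filter_le _ _)
        _ = m := hmal
    omega
  -- deviations of benign points are ≤ b - a
  have hdev : ∀ x ∈ B_ben, |x - η| ≤ b - a := by
    intro x hx
    have h1 := hax x hx
    have h2 := hxb x hx
    rw [abs_le]
    constructor <;> linarith
  apply le_trans (msMed_le (T := S.map fun x => |x - η|) (D := b - a) ?_)
  · linarith
  · have hfull : (B_ben.map fun x => |x - η|).filter (· ≤ b - a)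
        = B_ben.map fun x => |x - η| := by
      apply Multiset.filter_eq_self.2
      intro y hy
      rcases Multiset.mem_map.1 hy with ⟨x, hx, rfl⟩
      exact hdev x hx
    have hc1 : Multiset.card ((S.map fun x => |x - η|)) = n := by
      rw [Multiset.card_map, hcardS]
    have : Multiset.card (((S.map fun x => |x - η|)).filter (· ≤ b - a))
        ≥ n - m := by
      rw [hS, Multiset.map_add, Multiset.filter_add, Multiset.card_add, hfull,
        Multiset.card_map, hben]
      omega
    omega
end
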